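/- arXiv:2111.13054 — 6 statements merged into one kernel-verified Lean document; each statement's English description precedes it below -/
import Mathlib

section
/- For every finite connected simple graph G, the strong metric dimension of G equals the minimum size of a vertex cover of the strong resolving graph of G, i.e., smd(G) = τ(G_SR). -/
/-- Vertex `u` is maximally distant to `v`: no neighbour of `u` is farther from `v`. -/
def MaxDistTo {V : Type*} (G : SimpleGraph V) (u v : V) : Prop :=
  ∀ u', G.Adj u u' → G.dist u' v ≤ G.dist u v

/-- Vertices `u` and `v` are mutually maximally distant in `G`. -/
def MutuallyMaxDist {V : Type*} (G : SimpleGraph V) (u v : V) : Prop :=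
  MaxDistTo G u v ∧ MaxDistTo G v u

/-- The strong resolving graph of `G`. -/
def strongResolvingGraph {V : Type*} (G : SimpleGraph V) : SimpleGraph V where
  Adj u v := u ≠ v ∧ MutuallyMaxDist G u v
  symm := by
    constructor
    rintro u v ⟨h1, h2, h3⟩
    exact ⟨h1.symm, h3, h2⟩
  loopless := by
    constructor
    rintro u ⟨h, -⟩
    exact h rfl

/-- `w` strongly resolves the pair `u, v`. -/
def StronglyResolves {V : Type*} (G : SimpleGraph V) (w u v : V) : Prop :=
  G.dist w u = G.dist w v + G.dist v u ∨ G.dist w v = G.dist w u + G.dist u v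

/-- `R` is a strong resolving set for `G`. -/
def IsStrongResolvingSet {V : Type*} (G : SimpleGraph V) (R : Set V) : Prop :=
  ∀ u v : V, u ≠ v → ∃ w ∈ R, StronglyResolves G w u v

/-- The strong metric dimension of `G`. -/
noncomputable def smd {V : Type*} [Fintype V] (G : SimpleGraph V) : ℕ :=
  sInf {n | ∃ R : Finset V, IsStrongResolvingSet G ↑R ∧ R.card = n}

/-- `C` is a vertex cover of `H`. -/
def IsVertexCover {V : Type*} (H : SimpleGraph V) (C : Set V) : Prop :=
  ∀ a b : V, H.Adj a b → a ∈ C ∨ b ∈ C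

/-- The minimum size of a vertex cover of `H`. -/
noncomputable def tau {V : Type*} [Fintype V] (H : SimpleGraph V) : ℕ :=
  sInf {n | ∃ C : Finset V, IsVertexCover H ↑C ∧ C.card = n}

/-- Distinct vertices are twins if they have the same neighbours apart from each other. -/
def Twins {V : Type*} (G : SimpleGraph V) (u v : V) : Prop :=
  G.neighborSet u \ {v} = G.neighborSet v \ {u}

/-- True twins: adjacent twins (equivalently, equal closed neighbourhoods). -/
def TrueTwins {V : Type*} (G : SimpleGraph V) (u v : V) : Prop :=
  Twins G u v ∧ G.Adj u v

/-- False twins: non-adjacent twins (equivalently, equal open neighbourhoods). -/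
def FalseTwins {V : Type*} (G : SimpleGraph V) (u v : V) : Prop :=
  Twins G u v ∧ ¬ G.Adj u v

/-- `G` contains an induced path on four vertices. -/
def HasInducedP4 {V : Type*} (G : SimpleGraph V) : Prop :=
  ∃ a b c d : V, a ≠ c ∧ a ≠ d ∧ b ≠ d ∧
    G.Adj a b ∧ G.Adj b c ∧ G.Adj c d ∧ ¬ G.Adj a c ∧ ¬ G.Adj a d ∧ ¬ G.Adj b d

/-! A maximally distant vertex cannot lie strictly inside a geodesic, so a vertex that strongly
resolves a mutually maximally distant pair `u, v` is `u` or `v`: strong resolving sets are vertex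
covers of `G_SR`. Conversely, any pair `u, v` extends along a geodesic `u' … u v … v'` to a mutually
maximally distant pair `u', v'` (walk away from `v` as long as possible, then away from `u'`), and
whichever of `u', v'` lies in a vertex cover strongly resolves `u, v`. So both minima range over
the same family of sets. -/

namespace SimpleGraph

variable {V : Type*} {G : SimpleGraph V}

lemma Adj.dist_le_dist_add_one {v w : V} (hadj : G.Adj v w) (x : V) :
    G.dist w x ≤ G.dist v x + 1 := by
  rw [dist_comm, dist_comm (u := v)]
  rcases hadj.diff_dist_adj (u := x) with h | h | h <;> omega

lemma Reachable.exists_adj_dist_add_one_eq {u w : V} (hr : G.Reachable u w) (hne : u ≠ w) :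
    ∃ x, G.Adj u x ∧ G.dist x w + 1 = G.dist u w := by
  obtain ⟨p, hp⟩ := hr.exists_walk_length_eq_dist
  cases p with
  | nil => exact absurd rfl hne
  | @cons _ x _ hux q =>
    have hle : G.dist x w ≤ q.length := dist_le q
    have hge : G.dist u w ≤ G.dist x w + 1 := hux.symm.dist_le_dist_add_one w
    rw [Walk.length_cons] at hp
    exact ⟨x, hux, by omega⟩

end SimpleGraph

namespace MaxDistTo

variable {V : Type*} {G : SimpleGraph V}

lemma eq_of_dist_eq_add (hG : G.Connected) {a b w : V} (h : MaxDistTo G b a)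
    (hw : G.dist w a = G.dist w b + G.dist b a) : w = b := by
  by_contra hwb
  obtain ⟨x, hbx, hx⟩ := (hG.preconnected b w).exists_adj_dist_add_one_eq (Ne.symm hwb)
  have hxa : G.dist x a ≤ G.dist b a := h x hbx
  have htri : G.dist w a ≤ G.dist w x + G.dist x a := hG.dist_triangle
  have hwx : G.dist w x = G.dist x w := SimpleGraph.dist_comm
  have hwb' : G.dist w b = G.dist b w := SimpleGraph.dist_comm
  omega

lemma of_dist_eq_add (hG : G.Connected) {u v w : V} (h : MaxDistTo G v u)
    (hw : G.dist w v = G.dist w u + G.dist u v) : MaxDistTo G v w := by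
  intro x hvx
  calc G.dist x w ≤ G.dist x u + G.dist u w := hG.dist_triangle
    _ ≤ G.dist v u + G.dist u w := by gcongr; exact h x hvx
    _ = G.dist v w := by
      rw [SimpleGraph.dist_comm (u := v), SimpleGraph.dist_comm (u := v) (v := w),
        SimpleGraph.dist_comm (u := u) (v := w), add_comm, hw]

end MaxDistTo

section StrongResolving

variable {V : Type*} {G : SimpleGraph V}

lemma exists_maxDistTo_dist_eq_add [Finite V] (hG : G.Connected) (u v : V) :
    ∃ w, MaxDistTo G w v ∧ G.dist w v = G.dist w u + G.dist u v := by
  obtain ⟨w, hw, hwmax⟩ := Set.Finite.exists_maximalFor (fun w => G.dist w v)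
    {w | G.dist w v = G.dist w u + G.dist u v} (Set.toFinite _) ⟨u, by simp⟩
  refine ⟨w, fun w' hww' => ?_, hw⟩
  by_contra! hfar
  have hw' : G.dist w' v = G.dist w' u + G.dist u v := by
    have : G.dist w' v ≤ G.dist w' u + G.dist u v := hG.dist_triangle
    have := hww'.dist_le_dist_add_one u
    have := hww'.dist_le_dist_add_one v
    have : G.dist w v = G.dist w u + G.dist u v := hw
    omega
  exact hfar.not_ge (hwmax hw' hfar.le)

lemma StronglyResolves.eq_or_eq_of_adj (hG : G.Connected) {u v w : V}
    (hw : StronglyResolves G w u v) (huv : (strongResolvingGraph G).Adj u v) :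
    w = u ∨ w = v := by
  obtain ⟨-, hu, hv⟩ := huv
  rcases hw with h | h
  · exact Or.inr (hv.eq_of_dist_eq_add hG h)
  · exact Or.inl (hu.eq_of_dist_eq_add hG h)

lemma IsStrongResolvingSet.isVertexCover (hG : G.Connected) {R : Set V}
    (hR : IsStrongResolvingSet G R) : IsVertexCover (strongResolvingGraph G) R := by
  intro u v huv
  obtain ⟨w, hwR, hw⟩ := hR u v huv.1
  rcases hw.eq_or_eq_of_adj hG huv with rfl | rfl
  · exact Or.inl hwR
  · exact Or.inr hwR

lemma IsVertexCover.isStrongResolvingSet [Finite V] (hG : G.Connected) {R : Set V}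
    (hR : IsVertexCover (strongResolvingGraph G) R) : IsStrongResolvingSet G R := by
  intro u v huv
  obtain ⟨u', hu'v, hu'⟩ := exists_maxDistTo_dist_eq_add hG u v
  obtain ⟨v', hv'u', hv'⟩ := exists_maxDistTo_dist_eq_add hG v u'
  have huv_pos : 0 < G.dist u v := hG.pos_dist_of_ne huv
  have hvu' : G.dist v u' = G.dist u' v := SimpleGraph.dist_comm
  have hne : u' ≠ v' := by
    rintro rfl
    rw [SimpleGraph.dist_self] at hv'
    omega
  have hadj : (strongResolvingGraph G).Adj u' v' := ⟨hne, hu'v.of_dist_eq_add hG hv', hv'u'⟩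
  rcases hR u' v' hadj with hu'R | hv'R
  · exact ⟨u', hu'R, Or.inr hu'⟩
  · refine ⟨v', hv'R, Or.inl ?_⟩
    -- `hu'` and `hv'` force equality in both triangle inequalities below.
    have h₁ : G.dist v' u' ≤ G.dist v' u + G.dist u u' := hG.dist_triangle
    have h₂ : G.dist v' u ≤ G.dist v' v + G.dist v u := hG.dist_triangle
    have huu' : G.dist u u' = G.dist u' u := SimpleGraph.dist_comm
    have hvu : G.dist v u = G.dist u v := SimpleGraph.dist_comm
    omega

lemma isStrongResolvingSet_iff_isVertexCover [Finite V] (hG : G.Connected) (R : Set V) :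
    IsStrongResolvingSet G R ↔ IsVertexCover (strongResolvingGraph G) R :=
  ⟨(·.isVertexCover hG), (·.isStrongResolvingSet hG)⟩

end StrongResolving

/-- For every finite connected simple graph `G`,
`smd(G) = τ(G_SR)`. -/
theorem smd_eq_tau_strongResolvingGraph {V : Type*} [Fintype V]
    (G : SimpleGraph V) (hG : G.Connected) :
    smd G = tau (strongResolvingGraph G) := by
  simp only [smd, tau, isStrongResolvingSet_iff_isVertexCover hG]
end

section
/- Let G be a finite connected simple graph and u,v distinct twins in G. Then u and v are true twins in the strong resolving graph G_SR: they are adjacent in G_SR and have the same closed neighbourhood in G_SR. -/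
/-!
Exchanging two twins `u, v` is an automorphism of `G`. Automorphisms preserve distances, hence
mutual maximal distance, hence adjacency in `G_SR`; so `u, v` are twins in `G_SR` too. They are
also adjacent there: every neighbour of `u` other than `v` is a neighbour of `v`, so it is at
distance `1 ≤ d(u, v)` from `v`, and symmetrically.
-/

open SimpleGraph

section Twins

variable {V : Type*} {G : SimpleGraph V} {u v w : V}

theorem twins_iff : Twins G u v ↔ ∀ w, w ≠ u → w ≠ v → (G.Adj u w ↔ G.Adj v w) := by
  simp only [Twins, Set.ext_iff, Set.mem_sdiff, mem_neighborSet, Set.mem_singleton_iff]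
  refine ⟨fun h w hwu hwv => by simpa [hwu, hwv] using h w, fun h w => ?_⟩
  by_cases hwu : w = u
  · subst hwu; simp
  by_cases hwv : w = v
  · subst hwv; simp
  simp [h w hwu hwv, hwu, hwv]

theorem Twins.symm (h : Twins G u v) : Twins G v u := Eq.symm h

theorem Twins.adj_iff (h : Twins G u v) (hwu : w ≠ u) (hwv : w ≠ v) :
    G.Adj u w ↔ G.Adj v w :=
  twins_iff.1 h w hwu hwv

theorem TrueTwins.insert_neighborSet_eq (h : TrueTwins G u v) :
    insert u (G.neighborSet u) = insert v (G.neighborSet v) := by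
  ext w
  simp only [Set.mem_insert_iff, mem_neighborSet]
  by_cases hwu : w = u
  · subst hwu; exact iff_of_true (.inl rfl) (.inr h.2.symm)
  by_cases hwv : w = v
  · subst hwv; exact iff_of_true (.inr h.2) (.inl rfl)
  simp [hwu, hwv, h.1.adj_iff hwu hwv]

def Twins.swapIso [DecidableEq V] (h : Twins G u v) : G ≃g G where
  toEquiv := Equiv.swap u v
  map_rel_iff' := by
    intro a b
    grind [adj_comm, SimpleGraph.irrefl, h.adj_iff]

end Twins

namespace SimpleGraph

variable {V V' : Type*} {G : SimpleGraph V} {G' : SimpleGraph V'}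

theorem Hom.edist_map_le (f : G →g G') (u v : V) : G'.edist (f u) (f v) ≤ G.edist u v := by
  by_cases hr : G.Reachable u v
  · obtain ⟨p, hp⟩ := hr.exists_walk_length_eq_edist
    rw [← hp, ← p.length_map f]
    exact edist_le _
  · rw [edist_eq_top_of_not_reachable hr]
    exact le_top

theorem Iso.edist_map (φ : G ≃g G') (u v : V) : G'.edist (φ u) (φ v) = G.edist u v :=
  le_antisymm (Hom.edist_map_le φ.toHom u v) <| by
    simpa using Hom.edist_map_le φ.symm.toHom (φ u) (φ v)

theorem Iso.dist_map (φ : G ≃g G') (u v : V) : G'.dist (φ u) (φ v) = G.dist u v :=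
  congrArg ENat.toNat (φ.edist_map u v)

end SimpleGraph

section MaxDist

variable {V V' : Type*} {G : SimpleGraph V} {G' : SimpleGraph V'} {u v : V}

theorem MaxDistTo.map (φ : G ≃g G') (h : MaxDistTo G u v) : MaxDistTo G' (φ u) (φ v) := by
  intro w hw
  obtain ⟨x, rfl⟩ := φ.surjective w
  rw [φ.dist_map, φ.dist_map]
  exact h x (φ.map_adj_iff.1 hw)

theorem strongResolvingGraph_adj_map (φ : G ≃g G') (h : (strongResolvingGraph G).Adj u v) :
    (strongResolvingGraph G').Adj (φ u) (φ v) :=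
  ⟨φ.injective.ne h.1, h.2.1.map φ, h.2.2.map φ⟩

theorem Twins.twins_strongResolvingGraph (h : Twins G u v) :
    Twins (strongResolvingGraph G) u v := by
  classical
  refine twins_iff.2 fun w hwu hwv => ⟨fun hw => ?_, fun hw => ?_⟩ <;>
    simpa [Twins.swapIso, Equiv.swap_apply_of_ne_of_ne hwu hwv] using
      strongResolvingGraph_adj_map h.swapIso hw

theorem Twins.maxDistTo (h : Twins G u v) (huv : u ≠ v) : MaxDistTo G u v := by
  intro w hw
  by_cases hwv : w = v
  · simp [hwv]
  have hvw : G.Adj v w := (h.adj_iff (G.ne_of_adj hw).symm hwv).1 hw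
  rw [dist_comm, dist_eq_one_iff_adj.2 hvw]
  exact (hw.reachable.trans hvw.symm.reachable).pos_dist_of_ne huv

theorem Twins.strongResolvingGraph_adj (h : Twins G u v) (huv : u ≠ v) :
    (strongResolvingGraph G).Adj u v :=
  ⟨huv, h.maxDistTo huv, h.symm.maxDistTo huv.symm⟩

end MaxDist

theorem twins_trueTwins_strongResolvingGraph_general {V : Type*}
    (G : SimpleGraph V) (u v : V) (huv : u ≠ v)
    (h : Twins G u v) :
    (strongResolvingGraph G).Adj u v ∧
      insert u ((strongResolvingGraph G).neighborSet u) =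
        insert v ((strongResolvingGraph G).neighborSet v) := by
  have hadj := h.strongResolvingGraph_adj huv
  exact ⟨hadj, TrueTwins.insert_neighborSet_eq ⟨h.twins_strongResolvingGraph, hadj⟩⟩

/-- distinct twins of a connected graph `G` are true twins of
`G_SR`: adjacent in `G_SR` with equal closed neighbourhoods there. -/
theorem twins_trueTwins_strongResolvingGraph {V : Type*} [Fintype V]
    (G : SimpleGraph V) (hG : G.Connected) (u v : V) (huv : u ≠ v)
    (h : Twins G u v) :
    (strongResolvingGraph G).Adj u v ∧
      insert u ((strongResolvingGraph G).neighborSet u) =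
        insert v ((strongResolvingGraph G).neighborSet v) :=
  twins_trueTwins_strongResolvingGraph_general G u v huv h
end

section
/- Let G be a finite connected simple graph in which every pair of vertices is at distance at most 2. Then for all distinct vertices u,v, {u,v} is an edge of the strong resolving graph G_SR if and only if {u,v} is a non-edge of G (i.e., an edge of the complement of G) or u and v are true twins in G. In other words, E(G_SR) = E(complement of G) ∪ {pairs of true twins of G}. -/
/-!
Non-adjacent distinct vertices are at distance 2, the diameter, so they are trivially mutually
maximally distant. For adjacent `u, v` we have `d(u, v) = 1`, so `u` is maximally distant to `v`
exactly when every neighbour of `u` other than `v` is adjacent to `v`; imposing this in both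
directions says that `u` and `v` are twins.
-/

namespace SimpleGraph

variable {V : Type*} {G : SimpleGraph V} {u v : V}

lemma Reachable.dist_le_one_iff (h : G.Reachable u v) :
    G.dist u v ≤ 1 ↔ G.Adj u v ∨ u = v := by
  rw [← edist_le_one_iff_adj_or_eq, ← h.coe_dist_eq_edist, Nat.cast_le_one]

end SimpleGraph

section

open SimpleGraph

variable {V : Type*} {G : SimpleGraph V} {u v : V}

lemma maxDistTo_iff_of_adj (h : G.Adj u v) :
    MaxDistTo G u v ↔ G.neighborSet u \ {v} ⊆ G.neighborSet v := by
  simp only [MaxDistTo, dist_eq_one_iff_adj.mpr h, Set.subset_def, Set.mem_sdiff,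
    mem_neighborSet, Set.mem_singleton_iff, and_imp]
  refine forall_congr' fun x => imp_congr_right fun hux => ?_
  rw [(hux.symm.reachable.trans h.reachable).dist_le_one_iff, G.adj_comm x v]
  tauto

lemma mutuallyMaxDist_iff_twins_of_adj (h : G.Adj u v) : MutuallyMaxDist G u v ↔ Twins G u v := by
  rw [MutuallyMaxDist, maxDistTo_iff_of_adj h, maxDistTo_iff_of_adj h.symm]
  constructor
  · rintro ⟨hu, hv⟩
    exact (Set.subset_sdiff_singleton hu (by simp)).antisymm
      (Set.subset_sdiff_singleton hv (by simp))
  · intro htw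
    exact ⟨htw ▸ Set.sdiff_subset, htw ▸ Set.sdiff_subset⟩

lemma mutuallyMaxDist_of_forall_dist_le (h : ∀ x y, G.dist x y ≤ G.dist u v) :
    MutuallyMaxDist G u v :=
  ⟨fun x _ => h x v, fun x _ => (h x u).trans_eq dist_comm⟩

end

theorem strongResolvingGraph_eq_compl_union_trueTwins_general {V : Type*}
    (G : SimpleGraph V) (hG : G.Connected) (hdiam : ∀ x y : V, G.dist x y ≤ 2) :
    ∀ u v : V, u ≠ v →
      ((strongResolvingGraph G).Adj u v ↔ Gᶜ.Adj u v ∨ TrueTwins G u v) := by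
  intro u v huv
  by_cases hadj : G.Adj u v
  · simp [strongResolvingGraph, TrueTwins, huv, hadj, mutuallyMaxDist_iff_twins_of_adj hadj]
  · have hdist : G.dist u v = 2 :=
      le_antisymm (hdiam u v) (hG.one_lt_dist_of_ne_of_not_adj huv hadj)
    have hmax := mutuallyMaxDist_of_forall_dist_le (hdist ▸ hdiam)
    simp [strongResolvingGraph, huv, hadj, hmax]

/-- if `G` is connected of diameter at most 2, then the edges of
`G_SR` are exactly the non-edges of `G` together with the true-twin pairs. -/
theorem strongResolvingGraph_eq_compl_union_trueTwins {V : Type*} [Fintype V]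
    (G : SimpleGraph V) (hG : G.Connected) (hdiam : ∀ x y : V, G.dist x y ≤ 2) :
    ∀ u v : V, u ≠ v →
      ((strongResolvingGraph G).Adj u v ↔ Gᶜ.Adj u v ∨ TrueTwins G u v) :=
  strongResolvingGraph_eq_compl_union_trueTwins_general G hG hdiam
end

section
/- Let G be a finite connected simple graph and u,v true twins in G, and let G' = G \ v be the subgraph induced on V(G) \ {v}. Then the strong resolving graph of G' equals the subgraph of the strong resolving graph of G induced on V(G) \ {v}; that is, for all distinct w1,w2 ∈ V(G) \ {v}, w1 and w2 are mutually maximally distant in G' if and only if they are mutually maximally distant in G. -/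
namespace SimpleGraph

variable {V W : Type*} {G : SimpleGraph V} {H : SimpleGraph W} {f : V → W}

lemma Walk.exists_walk_map_length_le (hf : ∀ ⦃a b⦄, G.Adj a b → f a = f b ∨ H.Adj (f a) (f b))
    {a b : V} (p : G.Walk a b) : ∃ q : H.Walk (f a) (f b), q.length ≤ p.length := by
  induction p with
  | nil => exact ⟨.nil, le_rfl⟩
  | @cons a c b hac p ih =>
    obtain ⟨q, hq⟩ := ih
    rcases hf hac with hfac | hfac
    · exact ⟨q.copy hfac.symm rfl, by simp only [Walk.length_copy, Walk.length_cons]; omega⟩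
    · exact ⟨.cons hfac q, by simpa using hq⟩

lemma edist_map_le_edist (hf : ∀ ⦃a b⦄, G.Adj a b → f a = f b ∨ H.Adj (f a) (f b)) (a b : V) :
    H.edist (f a) (f b) ≤ G.edist a b := by
  by_cases hab : G.Reachable a b
  · obtain ⟨p, hp⟩ := hab.exists_walk_length_eq_edist
    obtain ⟨q, hq⟩ := p.exists_walk_map_length_le hf
    calc H.edist (f a) (f b) ≤ q.length := edist_le q
      _ ≤ p.length := by exact_mod_cast hq
      _ = G.edist a b := hp
  · simp [edist_eq_top_of_not_reachable hab]

end SimpleGraph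

open SimpleGraph

section retract

variable {V : Type*} {u v : V}

open Classical in
noncomputable def retractTo (huv : u ≠ v) (a : V) : ({x | x ≠ v} : Set V) :=
  if ha : a = v then ⟨u, huv⟩ else ⟨a, ha⟩

lemma retractTo_self (huv : u ≠ v) : retractTo huv v = ⟨u, huv⟩ := dif_pos rfl

lemma retractTo_of_ne (huv : u ≠ v) {a : V} (ha : a ≠ v) : retractTo huv a = ⟨a, ha⟩ :=
  dif_neg ha

end retract

namespace TrueTwins

variable {V : Type*} {G : SimpleGraph V} {u v : V} (h : TrueTwins G u v)
include h

lemma ne : u ≠ v := h.2.ne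

lemma symm : TrueTwins G v u := ⟨h.1.symm, h.2.symm⟩

lemma adj_of_adj {c : V} (hvc : G.Adj v c) (hcu : c ≠ u) : G.Adj u c :=
  ((Set.ext_iff.mp h.1 c).mpr ⟨hvc, hcu⟩).1

lemma retractTo_adj ⦃a c : V⦄ (hac : G.Adj a c) :
    retractTo h.ne a = retractTo h.ne c ∨
      (G.induce {x | x ≠ v}).Adj (retractTo h.ne a) (retractTo h.ne c) := by
  have from_v : ∀ {c}, G.Adj v c → retractTo h.ne v = retractTo h.ne c ∨
      (G.induce {x | x ≠ v}).Adj (retractTo h.ne v) (retractTo h.ne c) := by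
    intro c hvc
    rw [retractTo_self, retractTo_of_ne h.ne hvc.ne.symm]
    by_cases hcu : c = u
    · exact .inl (Subtype.ext hcu.symm)
    · exact .inr (h.adj_of_adj hvc hcu)
  by_cases ha : a = v
  · rw [ha] at hac ⊢
    exact from_v hac
  by_cases hc : c = v
  · rw [hc] at hac ⊢
    exact (from_v hac.symm).imp Eq.symm Adj.symm
  rw [retractTo_of_ne h.ne ha, retractTo_of_ne h.ne hc]
  exact .inr hac

lemma edist_induce {a b : V} (ha : a ≠ v) (hb : b ≠ v) :
    (G.induce {x | x ≠ v}).edist ⟨a, ha⟩ ⟨b, hb⟩ = G.edist a b := by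
  refine le_antisymm ?_ (edist_map_le_edist (f := Subtype.val) (fun _ _ hxy ↦ .inr hxy) _ _)
  simpa only [retractTo_of_ne h.ne ha, retractTo_of_ne h.ne hb]
    using edist_map_le_edist h.retractTo_adj a b

lemma dist_induce {a b : V} (ha : a ≠ v) (hb : b ≠ v) :
    (G.induce {x | x ≠ v}).dist ⟨a, ha⟩ ⟨b, hb⟩ = G.dist a b :=
  congrArg ENat.toNat (h.edist_induce ha hb)

lemma edist_le_edist {b : V} (hb : b ≠ v) : G.edist u b ≤ G.edist v b :=
  calc G.edist u b = (G.induce {x | x ≠ v}).edist (retractTo h.ne v) (retractTo h.ne b) := by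
        rw [retractTo_self, retractTo_of_ne h.ne hb, h.edist_induce]
    _ ≤ G.edist v b := edist_map_le_edist h.retractTo_adj v b

lemma dist_eq_dist {b : V} (hbu : b ≠ u) (hbv : b ≠ v) : G.dist u b = G.dist v b :=
  congrArg ENat.toNat (le_antisymm (h.edist_le_edist hbv) (h.symm.edist_le_edist hbu))

lemma maxDistTo_induce_iff {a b : V} (ha : a ≠ v) (hb : b ≠ v) (hab : a ≠ b) :
    MaxDistTo (G.induce {x | x ≠ v}) ⟨a, ha⟩ ⟨b, hb⟩ ↔ MaxDistTo G a b := by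
  refine ⟨fun H c hac ↦ ?_, fun H ⟨c, hc⟩ hac ↦ ?_⟩
  · by_cases hc : c = v
    · rw [hc] at hac ⊢
      by_cases hbu : b = u
      · rw [hbu, dist_eq_one_iff_adj.mpr h.2.symm]
        exact (hac.reachable.trans h.2.symm.reachable).pos_dist_of_ne (hbu ▸ hab)
      rw [← h.dist_eq_dist hbu hb]
      by_cases hau : a = u
      · rw [hau]
      simpa only [h.dist_induce] using H ⟨u, h.ne⟩ (h.adj_of_adj hac.symm hau).symm
    · simpa only [h.dist_induce] using H ⟨c, hc⟩ hac
  · simpa only [h.dist_induce] using H c hac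

end TrueTwins

theorem strongResolvingGraph_deleteTrueTwin_general {V : Type*}
    (G : SimpleGraph V) (u v : V)
    (h : TrueTwins G u v) :
    ∀ w1 w2 : ({x | x ≠ v} : Set V), w1 ≠ w2 →
      (MutuallyMaxDist (G.induce {x | x ≠ v}) w1 w2 ↔
        MutuallyMaxDist G (w1 : V) (w2 : V)) := by
  rintro ⟨a, ha⟩ ⟨b, hb⟩ hne
  have hab : a ≠ b := fun e ↦ hne (Subtype.ext e)
  exact and_congr (h.maxDistTo_induce_iff ha hb hab) (h.maxDistTo_induce_iff hb ha hab.symm)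

/-- deleting one vertex of a true-twin pair, mutual maximal
distance is preserved; hence the strong resolving graph of `G \ v` is the
induced subgraph of `G_SR` on `V(G) \ {v}`. -/
theorem strongResolvingGraph_deleteTrueTwin {V : Type*} [Fintype V] [DecidableEq V]
    (G : SimpleGraph V) (hG : G.Connected) (u v : V) (huv : u ≠ v)
    (h : TrueTwins G u v) :
    ∀ w1 w2 : ({x | x ≠ v} : Set V), w1 ≠ w2 →
      (MutuallyMaxDist (G.induce {x | x ≠ v}) w1 w2 ↔
        MutuallyMaxDist G (w1 : V) (w2 : V)) :=
  strongResolvingGraph_deleteTrueTwin_general G u v h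
end

section
/- Let G be a finite connected cograph on n vertices. Then smd(G) = n − m, where m is the maximum size of a clique K of G such that no two distinct vertices of K are true twins in G. (This is the theorem smd(G) = n − ω(G') of the paper, since for any graph G' obtained from G by successively deleting one vertex from pairs of true twins until none remain, ω(G') equals this maximum m.) -/
/-!
In a connected cograph any two vertices are at distance at most 2: the first four vertices of a
shortest path of length at least 3 would induce a `P₄`. With all distances in `{0, 1, 2}`, a
non-adjacent pair, and likewise a pair of twins, is strongly resolved only by its own two vertices,
while an adjacent pair `u, v` of non-twins is strongly resolved by a vertex adjacent to exactly
one of them, which therefore lies outside every clique containing `u` and `v`. Hence `R` is a strong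
resolving set exactly when its complement is a clique without true twins, and minimising `|R|` is
maximising such a clique.
-/

namespace SimpleGraph

variable {V : Type*} {G : SimpleGraph V} {u v w : V}

lemma Walk.dist_getVert_of_length_eq_dist (p : G.Walk u v) (hp : p.length = G.dist u v)
    {i : ℕ} (hi : i ≤ p.length) : G.dist u (p.getVert i) = i := by
  have hhead : G.dist u (p.getVert i) ≤ i := by simpa [hi] using dist_le (p.take i)
  have htail : G.dist (p.getVert i) v ≤ p.length - i := by simpa using dist_le (p.drop i)
  have := (p.drop i).reachable.dist_triangle_right u
  omega

lemma Connected.dist_le_two_of_not_hasInducedP4 (hG : G.Connected) (hP4 : ¬ HasInducedP4 G)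
    (u v : V) : G.dist u v ≤ 2 := by
  by_contra! h
  obtain ⟨p, hp⟩ := hG.exists_walk_length_eq_dist u v
  have hdist (i : ℕ) (hi : i ≤ 3) : G.dist u (p.getVert i) = i :=
    p.dist_getVert_of_length_eq_dist hp (by omega)
  have hadj (i : ℕ) (hi : i < 3) : G.Adj (p.getVert i) (p.getVert (i + 1)) :=
    p.adj_getVert_succ (by omega)
  have hne (i j : ℕ) (hj : j ≤ 3) (hij : i < j) : p.getVert i ≠ p.getVert j := fun h => by
    have := hdist j hj; rw [← h, hdist i (by omega)] at this; omega
  have hnadj (i j : ℕ) (hj : j ≤ 3) (hij : i + 2 ≤ j) : ¬ G.Adj (p.getVert i) (p.getVert j) :=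
    fun h => by
      rcases h.diff_dist_adj (u := u) with h | h | h <;>
        rw [hdist i (by omega), hdist j hj] at h <;> omega
  exact hP4 ⟨_, _, _, _, hne 0 2 (by omega) (by omega), hne 0 3 le_rfl (by omega),
    hne 1 3 le_rfl (by omega), hadj 0 (by omega), hadj 1 (by omega), hadj 2 (by omega),
    hnadj 0 2 (by omega) le_rfl, hnadj 0 3 le_rfl (by omega), hnadj 1 3 le_rfl le_rfl⟩

lemma twins_iff_forall_adj_iff : Twins G u v ↔ ∀ w, w ≠ u → w ≠ v → (G.Adj u w ↔ G.Adj v w) := by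
  simp only [Twins, Set.ext_iff, Set.mem_sdiff, mem_neighborSet, Set.mem_singleton_iff]
  refine forall_congr' fun w => ?_
  by_cases hwu : w = u <;> by_cases hwv : w = v <;> simp_all

lemma dist_eq_two_of_not_adj (hG : G.Connected) (hdiam : ∀ x y, G.dist x y ≤ 2)
    (hne : u ≠ v) (hnadj : ¬ G.Adj u v) : G.dist u v = 2 :=
  le_antisymm (hdiam u v) (hG.one_lt_dist_of_ne_of_not_adj hne hnadj)

lemma eq_or_eq_of_stronglyResolves_of_not_adj (hG : G.Connected)
    (hdiam : ∀ x y, G.dist x y ≤ 2) (hne : u ≠ v) (hnadj : ¬ G.Adj u v)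
    (h : StronglyResolves G w u v) : w = u ∨ w = v := by
  have huv := dist_eq_two_of_not_adj hG hdiam hne hnadj
  have hvu : G.dist v u = 2 := dist_comm.trans huv
  have := hdiam w u
  have := hdiam w v
  rcases h with h | h
  · exact .inr (hG.dist_eq_zero_iff.mp (by omega))
  · exact .inl (hG.dist_eq_zero_iff.mp (by omega))

lemma dist_eq_of_twins (hG : G.Connected) (hdiam : ∀ x y, G.dist x y ≤ 2)
    (h : Twins G u v) (hwu : w ≠ u) (hwv : w ≠ v) :
    G.dist w u = G.dist w v := by
  have hadj : G.dist w u = 1 ↔ G.dist w v = 1 := by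
    simpa only [dist_eq_one_iff_adj, G.adj_comm w] using twins_iff_forall_adj_iff.mp h w hwu hwv
  have := hG.pos_dist_of_ne hwu
  have := hG.pos_dist_of_ne hwv
  have := hdiam w u
  have := hdiam w v
  omega

lemma eq_or_eq_of_stronglyResolves_of_twins (hG : G.Connected)
    (hdiam : ∀ x y, G.dist x y ≤ 2) (h : Twins G u v) (hne : u ≠ v)
    (hw : StronglyResolves G w u v) : w = u ∨ w = v := by
  by_contra! hw'
  have := dist_eq_of_twins hG hdiam h hw'.1 hw'.2
  have := hG.pos_dist_of_ne hne
  have := hG.pos_dist_of_ne hne.symm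
  rcases hw with hw | hw <;> omega

lemma exists_stronglyResolves_of_adj_of_not_twins (hG : G.Connected)
    (hdiam : ∀ x y, G.dist x y ≤ 2) (hadj : G.Adj u v) (h : ¬ Twins G u v) :
    ∃ w, w ≠ u ∧ w ≠ v ∧ (¬ G.Adj w u ∨ ¬ G.Adj w v) ∧ StronglyResolves G w u v := by
  obtain ⟨w, hwu, hwv, hw⟩ : ∃ w, w ≠ u ∧ w ≠ v ∧ ¬ (G.Adj u w ↔ G.Adj v w) := by
    simpa [twins_iff_forall_adj_iff] using h
  by_cases huw : G.Adj u w
  · have hwv' : ¬ G.Adj w v := fun hvw => hw (iff_of_true huw hvw.symm)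
    refine ⟨w, hwu, hwv, .inr hwv', .inr ?_⟩
    rw [dist_eq_two_of_not_adj hG hdiam hwv hwv', dist_eq_one_iff_adj.mpr huw.symm,
      dist_eq_one_iff_adj.mpr hadj]
  · have hwu' : ¬ G.Adj w u := huw ∘ Adj.symm
    refine ⟨w, hwu, hwv, .inl hwu', .inl ?_⟩
    have hvw : G.Adj v w := (not_iff.mp hw).mp huw
    rw [dist_eq_two_of_not_adj hG hdiam hwu hwu', dist_eq_one_iff_adj.mpr hvw.symm,
      dist_eq_one_iff_adj.mpr hadj.symm]

theorem isStrongResolvingSet_iff (hG : G.Connected) (hdiam : ∀ x y, G.dist x y ≤ 2)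
    {R : Set V} :
    IsStrongResolvingSet G R ↔ G.IsClique Rᶜ ∧ Rᶜ.Pairwise fun u v => ¬ TrueTwins G u v := by
  constructor
  · intro hR
    have only_ends : ∀ u ∈ Rᶜ, ∀ v ∈ Rᶜ, u ≠ v →
        ¬ ∀ w, StronglyResolves G w u v → w = u ∨ w = v := by
      intro u hu v hv hne hends
      obtain ⟨w, hwR, hw⟩ := hR u v hne
      rcases hends w hw with rfl | rfl <;> contradiction
    refine ⟨fun u hu v hv hne => ?_, fun u hu v hv hne htt => ?_⟩
    · by_contra hnadj
      exact only_ends u hu v hv hne fun w =>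
        eq_or_eq_of_stronglyResolves_of_not_adj hG hdiam hne hnadj
    · exact only_ends u hu v hv hne fun w =>
        eq_or_eq_of_stronglyResolves_of_twins hG hdiam htt.1 hne
  · rintro ⟨hclique, htwinfree⟩ u v hne
    by_cases hu : u ∈ R
    · exact ⟨u, hu, .inr (by simp)⟩
    by_cases hv : v ∈ R
    · exact ⟨v, hv, .inl (by simp)⟩
    have hadj : G.Adj u v := hclique hu hv hne
    obtain ⟨w, hwu, hwv, hnadj, hw⟩ :=
      exists_stronglyResolves_of_adj_of_not_twins hG hdiam hadj fun htw =>
        htwinfree hu hv hne ⟨htw, hadj⟩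
    refine ⟨w, ?_, hw⟩
    by_contra hwR
    rcases hnadj with h | h
    exacts [h (hclique hwR hu hwu), h (hclique hwR hv hwv)]

end SimpleGraph

theorem Finset.sInf_card_eq_card_sub_sSup_card_compl {α : Type*} [Fintype α] [DecidableEq α]
    (P : Finset α → Prop) (hP : ∃ s, P s) :
    sInf {n | ∃ R : Finset α, P Rᶜ ∧ R.card = n} =
      Fintype.card α - sSup {n | ∃ s : Finset α, P s ∧ s.card = n} := by
  set B := {n | ∃ s : Finset α, P s ∧ s.card = n}
  have hB : BddAbove B := ⟨Fintype.card α, by rintro _ ⟨s, -, rfl⟩; exact s.card_le_univ⟩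
  obtain ⟨s₀, hs₀⟩ := hP
  obtain ⟨s, hs, hcard⟩ : sSup B ∈ B := Nat.sSup_mem ⟨_, s₀, hs₀, rfl⟩ hB
  have hmem : Fintype.card α - sSup B ∈ {n | ∃ R : Finset α, P Rᶜ ∧ R.card = n} :=
    ⟨sᶜ, by rwa [compl_compl], by rw [card_compl, hcard]⟩
  refine le_antisymm (Nat.sInf_le hmem) (le_csInf ⟨_, hmem⟩ ?_)
  rintro _ ⟨R, hR, rfl⟩
  have := le_csSup hB ⟨Rᶜ, hR, rfl⟩
  have := card_add_card_compl R
  omega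

/-- for a finite connected cograph on `n` vertices,
`smd(G) = n - m` where `m` is the maximum size of a clique of `G`
containing no pair of true twins of `G`. -/
theorem smd_eq_card_sub_twinlessCliqueNum {V : Type*} [Fintype V]
    (G : SimpleGraph V) (hG : G.Connected) (hP4 : ¬ HasInducedP4 G) :
    smd G = Fintype.card V -
      sSup {n | ∃ s : Finset V, G.IsNClique n s ∧
        ∀ u ∈ s, ∀ w ∈ s, u ≠ w → ¬ TrueTwins G u w} := by
  classical
  have hdiam := hG.dist_le_two_of_not_hasInducedP4 hP4
  let P (s : Finset V) : Prop :=
    G.IsClique (s : Set V) ∧ (s : Set V).Pairwise fun u v => ¬ TrueTwins G u v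
  have hsmd : smd G = sInf {n | ∃ R : Finset V, P Rᶜ ∧ R.card = n} := by
    simp only [smd, P, G.isStrongResolvingSet_iff hG hdiam, Finset.coe_compl]
  have hcliques : {n | ∃ s : Finset V, G.IsNClique n s ∧
      ∀ u ∈ s, ∀ w ∈ s, u ≠ w → ¬ TrueTwins G u w} = {n | ∃ s : Finset V, P s ∧ s.card = n} := by
    ext n
    simp only [Set.mem_ofPred_eq, G.isNClique_iff]
    exact exists_congr fun s => and_right_comm
  rw [hsmd, hcliques, Finset.sInf_card_eq_card_sub_sSup_card_compl P ⟨∅, by simp [P]⟩]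
end

section
/- For every finite strongly connected digraph G, the strong metric dimension of G equals the minimum size of a vertex cover of the strong resolving graph of G, i.e., smd(G) = τ(G_SR). -/
/-- There is a directed walk of length `n` from `u` to `v` in the digraph with
edge relation `E`. -/
def DWalk {V : Type*} (E : V → V → Prop) (u v : V) (n : ℕ) : Prop :=
  ∃ f : Fin (n + 1) → V, f 0 = u ∧ f (Fin.last n) = v ∧
    ∀ i : Fin n, E (f i.castSucc) (f i.succ)

/-- The length of a shortest directed path from `u` to `v`. -/
noncomputable def ddist {V : Type*} (E : V → V → Prop) (u v : V) : ℕ :=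
  sInf {n | DWalk E u v n}

/-- The digraph with edge relation `E` is strongly connected. -/
def StronglyConnected {V : Type*} (E : V → V → Prop) : Prop :=
  ∀ u v : V, ∃ n : ℕ, DWalk E u v n

/-- `u` is maximally distant to `v` (u MDT v): no in-neighbour of `u` is
farther from `v` than `u` is. -/
def MDT {V : Type*} (E : V → V → Prop) (u v : V) : Prop :=
  ∀ u', E u' u → ddist E u' v ≤ ddist E u v

/-- `v` is maximally distant from `u` (v MDF u): no out-neighbour of `v` is
farther from `u` than `v` is. -/
def MDF {V : Type*} (E : V → V → Prop) (v u : V) : Prop :=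
  ∀ v', E v v' → ddist E u v' ≤ ddist E u v

/-- `u` is mutually maximally distant to `v` (u MMDT v). -/
def MMDT {V : Type*} (E : V → V → Prop) (u v : V) : Prop :=
  MDT E u v ∧ MDF E v u

/-- The strong resolving graph of the digraph with edge relation `E`: an
undirected graph with an edge `{u,v}` iff `u ≠ v` and `u MMDT v` or `v MMDT u`. -/
def dsrGraph {V : Type*} (E : V → V → Prop) : SimpleGraph V where
  Adj u v := u ≠ v ∧ (MMDT E u v ∨ MMDT E v u)
  symm := by
    constructor
    rintro u v ⟨h1, h2⟩
    exact ⟨h1.symm, h2.symm⟩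
  loopless := by
    constructor
    rintro u ⟨h, -⟩
    exact h rfl

/-- `w` strongly resolves `u` to `v`: there is a shortest directed path from
`w` to `v` containing `u` or a shortest directed path from `u` to `w`
containing `v`. -/
def DStronglyResolves {V : Type*} (E : V → V → Prop) (w u v : V) : Prop :=
  ddist E w v = ddist E w u + ddist E u v ∨
  ddist E u w = ddist E u v + ddist E v w

/-- `R` is a strong resolving set for the digraph with edge relation `E`. -/
def IsDStrongResolvingSet {V : Type*} (E : V → V → Prop) (R : Set V) : Prop :=
  ∀ u v : V, u ≠ v → ∃ w ∈ R, DStronglyResolves E w u v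

/-- The strong metric dimension of the digraph with edge relation `E`. -/
noncomputable def dsmd {V : Type*} [Fintype V] (E : V → V → Prop) : ℕ :=
  sInf {n | ∃ R : Finset V, IsDStrongResolvingSet E ↑R ∧ R.card = n}

/-- The join of two digraphs on disjoint vertex sets: keep all edges and add
all edges in both directions between the two graphs. -/
def joinE {V1 V2 : Type*} (E1 : V1 → V1 → Prop) (E2 : V2 → V2 → Prop) :
    V1 ⊕ V2 → V1 ⊕ V2 → Prop
  | Sum.inl a, Sum.inl b => E1 a b
  | Sum.inr a, Sum.inr b => E2 a b
  | Sum.inl _, Sum.inr _ => True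
  | Sum.inr _, Sum.inl _ => True

/-- A solitary vertex: some other vertex with no edge to or from it. -/
def SolitaryVertex {V : Type*} (E : V → V → Prop) (u : V) : Prop :=
  ∃ v : V, v ≠ u ∧ ¬ E u v ∧ ¬ E v u

/-- An in-vertex: some vertex with an edge to `u` but no edge back. -/
def InVertex {V : Type*} (E : V → V → Prop) (u : V) : Prop :=
  ∃ v : V, E v u ∧ ¬ E u v

/-- An out-vertex: some vertex with an edge from `u` but no edge back. -/
def OutVertex {V : Type*} (E : V → V → Prop) (u : V) : Prop :=
  ∃ v : V, E u v ∧ ¬ E v u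

/-- An in-out-vertex: both an in-vertex and an out-vertex. -/
def InOutVertex {V : Type*} (E : V → V → Prop) (u : V) : Prop :=
  InVertex E u ∧ OutVertex E u


/-!
A vertex `w` that strongly resolves a mutually maximally distant pair `u`, `v` must be `u` or
`v`: otherwise the in-neighbour of `u` preceding it on a shortest `w`–`u` path (or the
out-neighbour of `v` following it on a shortest `v`–`w` path) would be farther from `v` (from `u`)
than `u` (than `v`). Conversely, given `u ≠ v`, push `u` backwards to `u₁` and then `v` forwards to
`v₁`, each time as far as possible while `u₁, u, v, v₁` stay on a shortest path. Then `u₁ MMDT v₁`,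
and both `u₁` and `v₁` strongly resolve `u` to `v`. Hence the strong resolving sets of `G` are
exactly the vertex covers of `G_SR`. Reversing all edges exchanges MDT and MDF, so every statement
about MDF is the corresponding one about MDT for the reverse digraph `flip E`.
-/

section

variable {V : Type*} {E : V → V → Prop} {u v w : V} {m n : ℕ}

theorem dWalk_zero_iff : DWalk E u v 0 ↔ u = v := by
  constructor
  · rintro ⟨f, rfl, rfl, -⟩
    rfl
  · rintro rfl
    exact ⟨fun _ => u, rfl, rfl, fun i => i.elim0⟩

theorem dWalk_succ_iff : DWalk E u v (n + 1) ↔ ∃ x, DWalk E u x n ∧ E x v := by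
  constructor
  · rintro ⟨f, h0, hlast, hadj⟩
    refine ⟨f (Fin.last n).castSucc, ⟨f ∘ Fin.castSucc, h0, rfl, fun i => ?_⟩, ?_⟩
    · simpa only [Function.comp_apply, Fin.succ_castSucc] using hadj i.castSucc
    · simpa only [Fin.succ_last, hlast] using hadj (Fin.last n)
  · rintro ⟨x, ⟨g, h0, hlast, hadj⟩, hxv⟩
    refine ⟨Fin.snoc g v, ?_, Fin.snoc_last _ _, fun i => ?_⟩
    · simpa only [← Fin.castSucc_zero, Fin.snoc_castSucc] using h0
    · induction i using Fin.lastCases with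
      | last => simpa only [Fin.snoc_castSucc, Fin.succ_last, Fin.snoc_last, hlast] using hxv
      | cast j => simpa only [Fin.succ_castSucc, Fin.snoc_castSucc] using hadj j

theorem DWalk.append (h₁ : DWalk E u v m) (h₂ : DWalk E v w n) : DWalk E u w (m + n) := by
  induction n generalizing w with
  | zero => rwa [dWalk_zero_iff.1 h₂] at h₁
  | succ n ih =>
    obtain ⟨x, hx, hxw⟩ := dWalk_succ_iff.1 h₂
    exact dWalk_succ_iff.2 ⟨x, ih hx, hxw⟩

theorem DWalk.flip (h : DWalk E u v n) : DWalk (flip E) v u n := by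
  obtain ⟨f, h0, hlast, hadj⟩ := h
  refine ⟨f ∘ Fin.rev, by simpa using hlast, by simpa using h0, fun i => ?_⟩
  simp only [Function.comp_apply, Fin.rev_castSucc, Fin.rev_succ]
  exact hadj i.rev

theorem dWalk_flip_iff : DWalk (flip E) u v n ↔ DWalk E v u n :=
  ⟨DWalk.flip, DWalk.flip⟩

theorem StronglyConnected.flip (hsc : StronglyConnected E) : StronglyConnected (flip E) :=
  fun u v => (hsc v u).imp fun _ => DWalk.flip

theorem ddist_flip (u v : V) : ddist (flip E) u v = ddist E v u := by
  simp only [ddist, dWalk_flip_iff]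

theorem ddist_le_of_dWalk (h : DWalk E u v n) : ddist E u v ≤ n :=
  Nat.sInf_le h

theorem ddist_le_one_of_adj (h : E u v) : ddist E u v ≤ 1 :=
  ddist_le_of_dWalk (dWalk_succ_iff.2 ⟨u, dWalk_zero_iff.2 rfl, h⟩)

@[simp]
theorem ddist_self (E : V → V → Prop) (u : V) : ddist E u u = 0 :=
  Nat.le_zero.1 (ddist_le_of_dWalk (dWalk_zero_iff.2 rfl))

theorem dWalk_ddist (hsc : StronglyConnected E) (u v : V) : DWalk E u v (ddist E u v) :=
  Nat.sInf_mem (hsc u v)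

theorem ddist_eq_zero_iff (hsc : StronglyConnected E) : ddist E u v = 0 ↔ u = v := by
  refine ⟨fun h => dWalk_zero_iff (E := E).1 ?_, fun h => h ▸ ddist_self E u⟩
  simpa only [h] using dWalk_ddist hsc u v

theorem ddist_triangle (hsc : StronglyConnected E) (u v w : V) :
    ddist E u w ≤ ddist E u v + ddist E v w :=
  ddist_le_of_dWalk ((dWalk_ddist hsc u v).append (dWalk_ddist hsc v w))

theorem exists_adj_ddist_le_of_ddist_eq_succ (hsc : StronglyConnected E)
    (h : ddist E w u = n + 1) :
    ∃ u', E u' u ∧ ddist E w u' ≤ n := by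
  obtain ⟨u', hwu', hu'u⟩ := dWalk_succ_iff.1 (h ▸ dWalk_ddist hsc w u)
  exact ⟨u', hu'u, ddist_le_of_dWalk hwu'⟩

theorem mdt_flip_iff : MDT (flip E) v u ↔ MDF E v u := by
  simp only [MDT, MDF, ddist_flip]
  rfl

theorem MDT.of_ddist_eq_add (hsc : StronglyConnected E) (hu : MDT E u v)
    (h : ddist E u w = ddist E u v + ddist E v w) : MDT E u w := fun u' hu' => by
  have := ddist_triangle hsc u' v w
  have := hu u' hu'
  omega

theorem eq_of_mdt_of_ddist_eq_add (hsc : StronglyConnected E) (hu : MDT E u v)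
    (hw : ddist E w v = ddist E w u + ddist E u v) : w = u := by
  by_contra hwu
  obtain ⟨n, hn⟩ := Nat.exists_eq_succ_of_ne_zero (mt (ddist_eq_zero_iff hsc).1 hwu)
  obtain ⟨u', hu'u, hwu'⟩ := exists_adj_ddist_le_of_ddist_eq_succ hsc hn
  have := ddist_triangle hsc w u' v
  have := hu u' hu'u
  omega

theorem eq_of_mdf_of_ddist_eq_add (hsc : StronglyConnected E) (hv : MDF E v u)
    (hw : ddist E u w = ddist E u v + ddist E v w) : w = v :=
  eq_of_mdt_of_ddist_eq_add hsc.flip (mdt_flip_iff.2 hv) (by simp only [ddist_flip]; omega)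

theorem DStronglyResolves.eq_or_eq_of_mmdt (hsc : StronglyConnected E) (h : MMDT E u v)
    (hw : DStronglyResolves E w u v) : w = u ∨ w = v :=
  hw.imp (eq_of_mdt_of_ddist_eq_add hsc h.1) (eq_of_mdf_of_ddist_eq_add hsc h.2)

-- `u₁` is a vertex farthest from `v` among those from which some shortest path to `v` passes `u`.
theorem exists_mdt_ddist_eq_add [Finite V] (hsc : StronglyConnected E) (u v : V) :
    ∃ u₁, MDT E u₁ v ∧ ddist E u₁ v = ddist E u₁ u + ddist E u v := by
  obtain ⟨u₁, hu₁ : ddist E u₁ v = _, hmax⟩ := Set.exists_max_image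
    {x | ddist E x v = ddist E x u + ddist E u v} (ddist E · v) (Set.toFinite _)
    ⟨u, by simp⟩
  refine ⟨u₁, fun u' hu' => ?_, hu₁⟩
  by_contra! hfar
  have := ddist_le_one_of_adj hu'
  have := ddist_triangle hsc u' u₁ v
  have := ddist_triangle hsc u' u₁ u
  have := ddist_triangle hsc u' u v
  have := hmax u' (show ddist E u' v = _ by omega)
  omega

theorem exists_mdf_ddist_eq_add [Finite V] (hsc : StronglyConnected E) (u v : V) :
    ∃ v₁, MDF E v₁ u ∧ ddist E u v₁ = ddist E u v + ddist E v v₁ := by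
  obtain ⟨v₁, hv₁, h⟩ := exists_mdt_ddist_eq_add hsc.flip v u
  refine ⟨v₁, mdt_flip_iff.1 hv₁, ?_⟩
  simp only [ddist_flip] at h
  omega

theorem IsDStrongResolvingSet.mem_or_mem_of_mmdt (hsc : StronglyConnected E) {S : Set V}
    (hS : IsDStrongResolvingSet E S) (huv : u ≠ v) (h : MMDT E u v) : u ∈ S ∨ v ∈ S := by
  obtain ⟨w, hwS, hw⟩ := hS u v huv
  rcases hw.eq_or_eq_of_mmdt hsc h with rfl | rfl
  exacts [Or.inl hwS, Or.inr hwS]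

theorem IsVertexCover.isDStrongResolvingSet [Finite V] (hsc : StronglyConnected E) {S : Set V}
    (hS : IsVertexCover (dsrGraph E) S) : IsDStrongResolvingSet E S := by
  intro u v huv
  obtain ⟨u₁, hu₁, hu₁u⟩ := exists_mdt_ddist_eq_add hsc u v
  obtain ⟨v₁, hv₁, hvv₁⟩ := exists_mdf_ddist_eq_add hsc u₁ v
  have hne : u₁ ≠ v₁ := by
    rintro rfl
    have := (ddist_eq_zero_iff hsc).not.2 huv
    simp only [ddist_self] at hvv₁
    omega
  rcases hS u₁ v₁ ⟨hne, .inl ⟨hu₁.of_ddist_eq_add hsc hvv₁, hv₁⟩⟩ with hu₁S | hv₁S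
  · exact ⟨u₁, hu₁S, .inl hu₁u⟩
  · refine ⟨v₁, hv₁S, .inr ?_⟩
    have := ddist_triangle hsc u₁ u v₁
    have := ddist_triangle hsc u v v₁
    omega

theorem isDStrongResolvingSet_iff_isVertexCover [Finite V] (hsc : StronglyConnected E)
    (S : Set V) : IsDStrongResolvingSet E S ↔ IsVertexCover (dsrGraph E) S := by
  refine ⟨fun hS a b ⟨hab, hmm⟩ => ?_, IsVertexCover.isDStrongResolvingSet hsc⟩
  rcases hmm with h | h
  · exact hS.mem_or_mem_of_mmdt hsc hab h
  · exact (hS.mem_or_mem_of_mmdt hsc hab.symm h).symm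

end

theorem dsmd_eq_tau_dsrGraph_general {V : Type*} [Fintype V] (E : V → V → Prop)
    (hsc : StronglyConnected E) :
    dsmd E = tau (dsrGraph E) := by
  simp only [dsmd, tau, isDStrongResolvingSet_iff_isVertexCover hsc]

/-- for every finite strongly connected loopless digraph,
`smd(G) = τ(G_SR)`. -/
theorem dsmd_eq_tau_dsrGraph {V : Type*} [Fintype V] (E : V → V → Prop)
    (hloop : ∀ x : V, ¬ E x x) (hsc : StronglyConnected E) :
    dsmd E = tau (dsrGraph E) :=
  dsmd_eq_tau_dsrGraph_general E hsc
end
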